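/- Let p be a prime > 7 and J a multiset over (ZMod p)^3 with |J| = 5p - 3, N^p(J) = 0, and N^{2p}(J) ≡ r (mod p). Then N^{3p}(J) ≡ 2r + 4 and N^{4p}(J) ≡ r + 3 (mod p), and at most one of r, 2r+4, r+3 is divisible by p. -/

import Mathlib

/-- Number of zero-sum sub-multisets of `J` of cardinality `k`. -/
def N {p : ℕ} (k : ℕ) (J : Multiset (Fin 3 → ZMod p)) : ℕ :=
  (J.powerset.filter (fun T => Multiset.card T = k ∧ T.sum = 0)).card

/-!
Chevalley–Warning, applied to the `d + 1` equations `∑ i, x i ^ (p - 1) = 0` and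
`∑ i, a i * x i ^ (p - 1) = 0` of degree `p - 1` in more than `(d + 1) * (p - 1)` variables,
counts solutions by their support `S`: each zero-sum `S` with `p ∣ #S` carries
`(p - 1) ^ #S ≡ (-1) ^ (#S / p)` solutions (`p` odd), so `∑ k, (-1) ^ k * N^{kp} ≡ 0 (mod p)`.
For `|J| = 5p - 3` this gives `1 - N^p + N^{2p} - N^{3p} + N^{4p} ≡ 0`. Applying it to every
`(4p - 3)`-subset of `J` and summing, a zero-sum set of size `kp` is counted
`C(5p - 3 - kp, p) ≡ 4 - k` times (Lucas), whence `4 - 3 N^p + 2 N^{2p} - N^{3p} ≡ 0`.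
Solving the two relations with `N^p = 0` gives the claim.
-/

open Finset MvPolynomial

section ZeroSumCount

variable {ι G : Type*} [AddCommMonoid G] [DecidableEq G]

def zeroSumCount (a : ι → G) (s : Finset ι) (k : ℕ) : ℕ :=
  #{T ∈ s.powersetCard k | ∑ i ∈ T, a i = 0}

@[simp] lemma zeroSumCount_zero (a : ι → G) (s : Finset ι) : zeroSumCount a s 0 = 1 := by
  simp [zeroSumCount, filter_singleton]

lemma zeroSumCount_subtype (a : ι → G) (s : Finset ι) (k : ℕ) :
    zeroSumCount (fun i : s => a i) univ k = zeroSumCount a s k := by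
  conv_rhs => rw [← attach_map_val (s := s)]
  simp [zeroSumCount, powersetCard_map, filter_map]

lemma sum_zeroSumCount_powersetCard [DecidableEq ι] (a : ι → G) (s : Finset ι) {k m : ℕ}
    (hkm : k ≤ m) :
    ∑ W ∈ s.powersetCard m, zeroSumCount a W k
      = zeroSumCount a s k * (#s - k).choose (m - k) := by
  set Z := {T ∈ s.powersetCard k | ∑ i ∈ T, a i = 0}
  have hW : ∀ W ∈ s.powersetCard m, zeroSumCount a W k = #(Z.bipartiteAbove (· ⊇ ·) W) := by
    intro W hW
    rw [zeroSumCount, bipartiteAbove, filter_filter]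
    congr 1
    have hWs := (mem_powersetCard.1 hW).1
    ext T
    simp only [mem_filter, mem_powersetCard]
    exact ⟨fun ⟨⟨hTW, hTk⟩, hT0⟩ => ⟨⟨hTW.trans hWs, hTk⟩, hT0, hTW⟩,
      fun ⟨⟨_, hTk⟩, hT0, hTW⟩ => ⟨⟨hTW, hTk⟩, hT0⟩⟩
  have hT : ∀ T ∈ Z,
      #((s.powersetCard m).bipartiteBelow (· ⊇ ·) T) = (#s - k).choose (m - k) := by
    intro T hT
    obtain ⟨hTs, hTk⟩ := mem_powersetCard.1 (mem_filter.1 hT).1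
    rw [bipartiteBelow, card_filter_powersetCard_subset T s m hTs (hTk ▸ hkm), hTk]
  rw [sum_congr rfl hW, sum_card_bipartiteAbove_eq_sum_card_bipartiteBelow, sum_congr rfl hT,
    sum_const, smul_eq_mul]
  rfl

lemma sum_filter_dvd_card_eq_sum_range {R : Type*} [Semiring R] [Fintype ι] (a : ι → G)
    {p : ℕ} (hp : 0 < p) (f : ℕ → R) :
    ∑ S : Finset ι with p ∣ #S ∧ ∑ i ∈ S, a i = 0, f #S
      = ∑ k ∈ range (Fintype.card ι / p + 1), zeroSumCount a univ (k * p) * f (k * p) := by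
  rw [← sum_fiberwise_of_maps_to (g := fun S : Finset ι => #S / p)
    (t := range (Fintype.card ι / p + 1))]
  · refine sum_congr rfl fun k _ => ?_
    have hfiber : ({S : Finset ι | p ∣ #S ∧ ∑ i ∈ S, a i = 0} : Finset _).filter (#· / p = k)
        = {T ∈ (univ : Finset ι).powersetCard (k * p) | ∑ i ∈ T, a i = 0} := by
      ext S
      simp only [mem_filter, mem_univ, true_and, mem_powersetCard, subset_univ]
      constructor
      · rintro ⟨⟨hdvd, hS⟩, rfl⟩
        exact ⟨(Nat.div_mul_cancel hdvd).symm, hS⟩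
      · rintro ⟨hcard, hS⟩
        exact ⟨⟨hcard ▸ dvd_mul_left p k, hS⟩, by rw [hcard, Nat.mul_div_cancel _ hp]⟩
    rw [hfiber, sum_congr rfl fun S hS => by rw [(mem_powersetCard.1 (mem_filter.1 hS).1).2],
      sum_const, nsmul_eq_mul]
    rfl
  · intro S _
    exact mem_range.2 (Nat.lt_succ_of_le (Nat.div_le_div_right (card_le_univ S)))

end ZeroSumCount

lemma Multiset.powersetCard_eq_filter {α : Type*} (k : ℕ) (s : Multiset α) :
    s.powersetCard k = s.powerset.filter (fun T => Multiset.card T = k) := by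
  induction s using Multiset.induction generalizing k with
  | empty =>
    cases k <;> simp [Multiset.powersetCard_zero_left, Multiset.powersetCard_zero_right,
      Multiset.filter_singleton]
  | cons a s ih =>
    cases k <;> simp [Multiset.powerset_cons, Multiset.powersetCard_cons, Multiset.filter_add,
      Multiset.filter_map, ← ih, Multiset.powersetCard_zero_left]

lemma N_map_val_eq_zeroSumCount {ι : Type*} {p : ℕ} (a : ι → Fin 3 → ZMod p) (s : Finset ι)
    (k : ℕ) :
    N k (s.val.map a) = zeroSumCount a s k := by
  rw [N, ← Multiset.filter_filter, Multiset.filter_comm, ← Multiset.powersetCard_eq_filter,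
    Multiset.powersetCard_map, ← map_val_val_powersetCard, Multiset.map_map, Multiset.filter_map,
    Multiset.card_map, zeroSumCount, card_def]
  rfl

section ChevalleyWarning

variable {ι K : Type*} [Fintype ι] [Fintype K] [DecidableEq K]

lemma card_filter_support_eq [DecidableEq ι] [Zero K] (S : Finset ι) :
    #{x : ι → K | ({i | x i ≠ 0} : Finset ι) = S} = (Fintype.card K - 1) ^ #S := by
  have : ({x : ι → K | ({i | x i ≠ 0} : Finset ι) = S} : Finset _) =
      Fintype.piFinset fun i => if i ∈ S then {0}ᶜ else {0} := by
    ext x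
    simp only [mem_filter, mem_univ, true_and, Fintype.mem_piFinset, Finset.ext_iff]
    refine forall_congr' fun i => ?_
    split_ifs with hi <;> simp [hi]
  simp [this, Fintype.card_piFinset, apply_ite, card_compl]

lemma card_filter_support_mem [DecidableEq ι] [Zero K] (P : Finset ι → Prop) [DecidablePred P] :
    #{x : ι → K | P ({i | x i ≠ 0} : Finset ι)} = ∑ S with P S, (Fintype.card K - 1) ^ #S := by
  rw [card_eq_sum_card_fiberwise (f := fun x => ({i | x i ≠ 0} : Finset ι)) (t := {S | P S})]
  · refine sum_congr rfl fun S hS => ?_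
    rw [← card_filter_support_eq S, filter_filter]
    congr 1
    ext x
    simp only [mem_filter, mem_univ, true_and] at hS ⊢
    exact ⟨And.right, fun h => ⟨h ▸ hS, h⟩⟩
  · intro x hx
    simpa using hx

lemma eval_sum_C_mul_X_pow_card_sub_one [Field K] (c x : ι → K) :
    eval x (∑ i, C (c i) * X i ^ (Fintype.card K - 1)) = ∑ i with x i ≠ 0, c i := by
  rw [sum_filter, map_sum]
  refine sum_congr rfl fun i _ => ?_
  by_cases hx : x i = 0
  · have : Fintype.card K - 1 ≠ 0 := by have := Fintype.one_lt_card (α := K); omega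
    simp [hx, this]
  · simp [hx, FiniteField.pow_card_sub_one_eq_one _ hx]

theorem sum_neg_one_pow_card_of_zeroSum_eq_zero [DecidableEq ι] {p : ℕ} [Fact p.Prime] {d : ℕ}
    (a : ι → Fin d → ZMod p) (h : (d + 1) * (p - 1) < Fintype.card ι) :
    ∑ S : Finset ι with p ∣ #S ∧ ∑ i ∈ S, a i = 0, (-1 : ZMod p) ^ #S = 0 := by
  let b : ι → Fin (d + 1) → ZMod p := fun i => Matrix.vecCons 1 (a i)
  -- `X i ^ (p - 1)` is the indicator of `x i ≠ 0`: the system only sees the support `S` of `x`,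
  -- and its first equation reads `#S = 0` in `ZMod p`.
  let f : Fin (d + 1) → MvPolynomial ι (ZMod p) := fun j => ∑ i, C (b i j) * X i ^ (p - 1)
  have hdeg : ∑ j, (f j).totalDegree < Fintype.card ι := by
    have hfj (j : Fin (d + 1)) : (f j).totalDegree ≤ p - 1 :=
      (totalDegree_finsetSum _ _).trans <| Finset.sup_le fun i _ =>
        (totalDegree_mul _ _).trans (by simp [totalDegree_C, totalDegree_X_pow])
    calc ∑ j, (f j).totalDegree ≤ ∑ _j : Fin (d + 1), (p - 1) := sum_le_sum fun j _ => hfj j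
      _ = (d + 1) * (p - 1) := by simp
      _ < Fintype.card ι := h
  have heval (x : ι → ZMod p) (j : Fin (d + 1)) : eval x (f j) = ∑ i with x i ≠ 0, b i j := by
    simpa only [ZMod.card] using eval_sum_C_mul_X_pow_card_sub_one (fun i => b i j) x
  have hsol (x : ι → ZMod p) :
      (∀ j, eval x (f j) = 0) ↔ p ∣ #{i | x i ≠ 0} ∧ ∑ i with x i ≠ 0, a i = 0 := by
    simp only [heval, Fin.forall_fin_succ, b,
      Matrix.cons_val_zero, Matrix.cons_val_succ, sum_const, nsmul_one, ZMod.natCast_eq_zero_iff,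
      funext_iff, Finset.sum_apply, Pi.zero_apply]
  have hcw := char_dvd_card_solutions_of_fintype_sum_lt p hdeg
  rw [Fintype.card_subtype, filter_congr fun x _ => hsol x,
    card_filter_support_mem (fun S : Finset ι => p ∣ #S ∧ ∑ i ∈ S, a i = 0), ZMod.card,
    ← ZMod.natCast_eq_zero_iff] at hcw
  push_cast [(Fact.out : p.Prime).one_le, ZMod.natCast_self] at hcw
  simpa using hcw

end ChevalleyWarning

lemma natCast_choose_mul_add_prime {p : ℕ} [Fact p.Prime] {r : ℕ} (hr : r < p) (c : ℕ) :
    (((c * p + r).choose p : ℕ) : ZMod p) = c := by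
  have hp := (Fact.out : p.Prime).pos
  -- Lucas: the base-`p` digits of `c * p + r` and `p` are `(r, c)` and `(0, 1)`
  have h := Choose.choose_modEq_choose_mod_mul_choose_div_nat (n := c * p + r) (k := p) (p := p)
  have hdiv : (c * p + r) / p = c := by
    rw [add_comm, Nat.add_mul_div_right _ _ hp, Nat.div_eq_of_lt hr, zero_add]
  rwa [Nat.mul_add_mod_of_lt hr, hdiv, Nat.mod_self,
    Nat.div_self hp, Nat.choose_zero_right, Nat.choose_one_right, one_mul,
    ← ZMod.natCast_eq_natCast_iff] at h

section Relations

variable {ι : Type*} [DecidableEq ι] {p : ℕ} [Fact p.Prime]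

theorem sum_range_neg_one_pow_mul_zeroSumCount_eq_zero (hp2 : p ≠ 2) {d : ℕ}
    (a : ι → Fin d → ZMod p) (s : Finset ι) (h : (d + 1) * (p - 1) < #s) :
    ∑ k ∈ range (#s / p + 1), (-1 : ZMod p) ^ k * zeroSumCount a s (k * p) = 0 := by
  have hp : p.Prime := Fact.out
  have hcw := sum_neg_one_pow_card_of_zeroSum_eq_zero (fun i : s => a i)
    (by simpa using h)
  rw [sum_filter_dvd_card_eq_sum_range _ hp.pos, Fintype.card_coe] at hcw
  rw [← hcw]
  refine sum_congr rfl fun k _ => ?_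
  rw [zeroSumCount_subtype, pow_mul', (hp.odd_of_ne_two hp2).neg_one_pow, mul_comm]

lemma sum_range_four_zeroSumCount_of_card_eq (hp2 : p ≠ 2) (a : ι → Fin 3 → ZMod p)
    (s : Finset ι) (hs : #s = 5 * p - 3) :
    ∑ k ∈ range 4, (-1 : ZMod p) ^ k * ((4 - k : ℕ) * zeroSumCount a s (k * p)) = 0 := by
  have hp3 : 3 ≤ p := (Fact.out : p.Prime).two_le.lt_of_ne' hp2
  have hW : ∀ W ∈ s.powersetCard (4 * p - 3),
      ∑ k ∈ range 4, (-1 : ZMod p) ^ k * zeroSumCount a W (k * p) = 0 := by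
    intro W hW
    have hWc := (mem_powersetCard.1 hW).2
    have h := sum_range_neg_one_pow_mul_zeroSumCount_eq_zero hp2 a W (by omega)
    rwa [hWc, Nat.div_eq_of_lt_le (k := 3) (by omega) (by omega)] at h
  have hchoose : ∀ k < 4,
      (((#s - k * p).choose (4 * p - 3 - k * p) : ℕ) : ZMod p) = (4 - k : ℕ) := by
    intro k hk
    have hkp : k * p ≤ 3 * p := Nat.mul_le_mul_right p (by omega)
    have e1 : #s - k * p = (4 - k) * p + (p - 3) := by rw [Nat.sub_mul]; omega
    rw [Nat.choose_symm_of_eq_add (b := p) (by omega), e1, natCast_choose_mul_add_prime (by omega)]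
  calc ∑ k ∈ range 4, (-1 : ZMod p) ^ k * ((4 - k : ℕ) * zeroSumCount a s (k * p))
      = ∑ k ∈ range 4, (-1 : ZMod p) ^ k *
          ∑ W ∈ s.powersetCard (4 * p - 3), (zeroSumCount a W (k * p) : ZMod p) := by
        refine sum_congr rfl fun k hk => ?_
        have hk := mem_range.1 hk
        have hkp : k * p ≤ 3 * p := Nat.mul_le_mul_right p (by omega)
        rw [← Nat.cast_sum, sum_zeroSumCount_powersetCard a s (m := 4 * p - 3) (by omega),
          Nat.cast_mul, hchoose k hk, mul_comm ((4 - k : ℕ) : ZMod p)]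
    _ = ∑ W ∈ s.powersetCard (4 * p - 3),
          ∑ k ∈ range 4, (-1 : ZMod p) ^ k * zeroSumCount a W (k * p) := by
        simp_rw [mul_sum]
        exact sum_comm
    _ = 0 := sum_eq_zero hW

theorem zeroSumCount_relations_of_card_eq (hp2 : p ≠ 2) (a : ι → Fin 3 → ZMod p)
    (s : Finset ι) (hs : #s = 5 * p - 3) :
    (zeroSumCount a s (3 * p) : ZMod p) =
        2 * zeroSumCount a s (2 * p) - 3 * zeroSumCount a s p + 4 ∧
      (zeroSumCount a s (4 * p) : ZMod p) =
        zeroSumCount a s (2 * p) - 2 * zeroSumCount a s p + 3 := by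
  have hp3 : 3 ≤ p := (Fact.out : p.Prime).two_le.lt_of_ne' hp2
  have whole := sum_range_neg_one_pow_mul_zeroSumCount_eq_zero hp2 a s (by omega)
  rw [hs, Nat.div_eq_of_lt_le (k := 4) (by omega) (by omega)] at whole
  have averaged := sum_range_four_zeroSumCount_of_card_eq hp2 a s hs
  norm_num [sum_range_succ] at whole averaged
  constructor
  · linear_combination -averaged
  · linear_combination whole - averaged

end Relations

lemma not_both_dvd_of_four_lt {p : ℤ} (hp : 4 < p) (r : ℤ) (i j : Fin 3) (hij : i ≠ j) :
    ¬(p ∣ ![r, 2 * r + 4, r + 3] i ∧ p ∣ ![r, 2 * r + 4, r + 3] j) := by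
  wlog hlt : i < j generalizing i j
  · exact fun h => this j i hij.symm (lt_of_le_of_ne (not_lt.1 hlt) hij.symm) h.symm
  have not_dvd (c : ℤ) (h0 : 0 < c) (h4 : c ≤ 4) : ¬p ∣ c := fun hc => by
    have := Int.le_of_dvd h0 hc
    omega
  rintro ⟨hi, hj⟩
  fin_cases i <;> fin_cases j <;> simp at hlt hi hj
  · exact not_dvd 4 (by norm_num) le_rfl (by simpa using dvd_sub hj (dvd_mul_of_dvd_right hi 2))
  · exact not_dvd 3 (by norm_num) (by norm_num) (by simpa using dvd_sub hj hi)
  · exact not_dvd 2 (by norm_num) (by norm_num)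
      (by simpa [mul_add] using dvd_sub (dvd_mul_of_dvd_right hj 2) hi)

theorem stmt_16 (p : ℕ) (hp : p.Prime) (hp7 : 7 < p)
    (J : Multiset (Fin 3 → ZMod p)) (hJ : Multiset.card J = 5 * p - 3)
    (h1 : N p J = 0) (r : ℤ) (h2 : (N (2 * p) J : ℤ) ≡ r [ZMOD p]) :
    ((N (3 * p) J : ℤ) ≡ 2 * r + 4 [ZMOD p] ∧
     (N (4 * p) J : ℤ) ≡ r + 3 [ZMOD p]) ∧
    ∀ i j : Fin 3, i ≠ j →
      ¬((p : ℤ) ∣ ![r, 2 * r + 4, r + 3] i ∧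
        (p : ℤ) ∣ ![r, 2 * r + 4, r + 3] j) := by
  classical
  have := Fact.mk hp
  let a : J → Fin 3 → ZMod p := fun x => x
  have hN (k : ℕ) : N k J = zeroSumCount a univ k := by
    rw [← N_map_val_eq_zeroSumCount, Multiset.map_univ_coe]
  obtain ⟨h3, h4⟩ := zeroSumCount_relations_of_card_eq (by omega) a univ
    (by rw [card_univ, Multiset.card_coe, hJ])
  have h2' : (N (2 * p) J : ZMod p) = r := by
    exact_mod_cast (ZMod.intCast_eq_intCast_iff _ _ _).2 h2
  simp only [← hN] at h3 h4
  rw [h1, h2', Nat.cast_zero] at h3 h4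
  refine ⟨⟨?_, ?_⟩, not_both_dvd_of_four_lt (by omega) r⟩ <;>
    rw [← ZMod.intCast_eq_intCast_iff] <;> push_cast
  · rw [h3]; ring
  · rw [h4]; ring
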